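/- arXiv:0708.2152 — 2 statements merged into one kernel-verified Lean document; each statement's English description precedes it below -/
import Mathlib

section
/- Let d ≥ 1 and let μ be a probability measure on Ω satisfying GEMB(c) for some c > 0. Let f, g : Ω → ℝ be bounded measurable, let ψ : ℤ^d → [0,∞), let u, v ≥ 1 be real numbers with 1/u + 1/v = 3/2, and suppose that δ_i g ≤ (ψ * δf)(i) for every i ∈ ℤ^d, that 0 < ‖ψ‖_u < ∞ and 0 < ‖δf‖_v < ∞. Then for every a ≥ 0, μ{σ : |g(σ) − ∫ g dμ| ≥ a} ≤ 2 exp(−a² / (4c ‖ψ‖_u² ‖δf‖_v²)). -/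
open MeasureTheory Real

noncomputable section

/-- The configuration space `Ω = {0,1}^{ℤ^d}`, encoded as functions `ℤ^d → Bool`,
with the product σ-algebra (the Borel σ-algebra of the product topology). -/
abbrev Config (d : ℕ) := (Fin d → ℤ) → Bool

/-- `flipAt i σ` is the configuration `σ^i` obtained from `σ` by flipping the spin at site `i`. -/
def flipAt {d : ℕ} (i : Fin d → ℤ) (σ : Config d) : Config d :=
  Function.update σ i (!σ i)

/-- The variation of `f` at site `i`: `δ_i f = sup_η (f(η^i) - f(η))`. -/
noncomputable def varAt {d : ℕ} (i : Fin d → ℤ) (f : Config d → ℝ) : ℝ :=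
  ⨆ η : Config d, (f (flipAt i η) - f η)

/-- `μ` satisfies the Gaussian exponential-moment bound GEMB(c). -/
def GEMB {d : ℕ} (μ : Measure (Config d)) (c : ℝ) : Prop :=
  ∀ h : Config d → ℝ, Measurable h → (∃ M, ∀ σ, |h σ| ≤ M) →
    Summable (fun i : Fin d → ℤ => varAt i h ^ 2) →
    ∫ σ, Real.exp (h σ - ∫ τ, h τ ∂μ) ∂μ ≤
      Real.exp (c * ∑' i : Fin d → ℤ, varAt i h ^ 2)

/-!
Young's convolution inequality `‖ψ * b‖₂ ≤ ‖ψ‖_u ‖b‖_v` for `1/u + 1/v = 3/2`, obtained from a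
Cauchy–Schwarz splitting `ψ b = (ψ^u b^v)^{1/2} (ψ^{2-u} b^{2-v})^{1/2}` followed by Hölder with
exponents `(2-u)/u + (2-v)/v = 1`, gives `‖δg‖₂² ≤ K := ‖ψ‖_u² ‖δf‖_v²`. Applying GEMB to `t g` for
every real `t`, with `δ(t g) = |t| δg`, shows that `g - ∫ g dμ` is sub-Gaussian with variance proxy
`2cK`, and the Chernoff bound for `±(g - ∫ g dμ)` gives both tails.
-/

open scoped ENNReal NNReal

namespace ENNReal

variable {ι : Type*}

lemma tsum_rpow_mul_rpow_le (f g : ι → ℝ≥0∞) {p q : ℝ} (hp : 0 ≤ p) (hq : 0 ≤ q)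
    (hpq : p + q = 1) :
    ∑' i, f i ^ p * g i ^ q ≤ (∑' i, f i) ^ p * (∑' i, g i) ^ q := by
  let _ : MeasurableSpace ι := ⊤
  have _ : MeasurableSingletonClass ι := ⟨fun _ => trivial⟩
  simpa only [lintegral_count] using lintegral_mul_norm_pow_le (μ := (Measure.count : Measure ι))
    (f := f) (g := g) measurable_from_top.aemeasurable measurable_from_top.aemeasurable hp hq hpq

lemma tsum_mul_sq_le {u v : ℝ} (hu0 : 0 ≤ u) (hu2 : u ≤ 2) (hv0 : 0 ≤ v) (hv2 : v ≤ 2)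
    (x y : ι → ℝ≥0∞) :
    (∑' k, x k * y k) ^ 2 ≤
      (∑' k, x k ^ u * y k ^ v) * ∑' k, x k ^ (2 - u) * y k ^ (2 - v) := by
  have hsplit : ∀ k, x k * y k =
      (x k ^ u * y k ^ v) ^ (2⁻¹ : ℝ) * (x k ^ (2 - u) * y k ^ (2 - v)) ^ (2⁻¹ : ℝ) := by
    intro k
    rw [← mul_rpow_of_nonneg _ _ (by norm_num), mul_mul_mul_comm,
      ← rpow_add_of_nonneg _ _ hu0 (by linarith), ← rpow_add_of_nonneg _ _ hv0 (by linarith),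
      add_sub_cancel, add_sub_cancel, ← mul_rpow_of_nonneg _ _ (by norm_num), ← rpow_mul]
    norm_num
  calc (∑' k, x k * y k) ^ 2
      ≤ ((∑' k, x k ^ u * y k ^ v) ^ (2⁻¹ : ℝ) *
          (∑' k, x k ^ (2 - u) * y k ^ (2 - v)) ^ (2⁻¹ : ℝ)) ^ 2 := by
        simp_rw [hsplit]
        gcongr
        exact tsum_rpow_mul_rpow_le _ _ (by norm_num) (by norm_num) (by norm_num)
    _ = (∑' k, x k ^ u * y k ^ v) * ∑' k, x k ^ (2 - u) * y k ^ (2 - v) := by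
        rw [mul_pow]
        exact congrArg₂ _ (by exact_mod_cast rpow_inv_natCast_pow two_ne_zero _)
          (by exact_mod_cast rpow_inv_natCast_pow two_ne_zero _)

theorem tsum_conv_sq_le [AddCommGroup ι] (ψ b : ι → ℝ≥0∞) {u v : ℝ} (hu : 1 ≤ u) (hv : 1 ≤ v)
    (huv : 1 / u + 1 / v = 3 / 2) :
    ∑' i, (∑' k, ψ (i - k) * b k) ^ 2 ≤
      (∑' i, ψ i ^ u) ^ (2 / u) * (∑' i, b i ^ v) ^ (2 / v) := by
  have hu0 : 0 < u := by linarith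
  have hv0 : 0 < v := by linarith
  have hu2 : u ≤ 2 := by
    rw [← one_div_le_one_div (by norm_num) hu0]; linarith [(div_le_one hv0).2 hv]
  have hv2 : v ≤ 2 := by
    rw [← one_div_le_one_div (by norm_num) hv0]; linarith [(div_le_one hu0).2 hu]
  set A := ∑' i, ψ i ^ u
  set B := ∑' i, b i ^ v
  have hθ : (2 - u) / u + (2 - v) / v = 1 := by
    rw [sub_div, sub_div, div_self hu0.ne', div_self hv0.ne']
    linarith [show 2 / u + 2 / v = 2 * (1 / u + 1 / v) by ring]
  have hrow : ∀ i, ∑' k, ψ (i - k) ^ u = A := fun i =>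
    (Equiv.subLeft i).tsum_eq fun j => ψ j ^ u
  have hcol : ∀ k, ∑' i, ψ (i - k) ^ u = A := fun k =>
    (Equiv.subRight k).tsum_eq fun j => ψ j ^ u
  have hholder : ∀ i, ∑' k, ψ (i - k) ^ (2 - u) * b k ^ (2 - v) ≤
      A ^ ((2 - u) / u) * B ^ ((2 - v) / v) := by
    intro i
    have h := tsum_rpow_mul_rpow_le (fun k => ψ (i - k) ^ u) (fun k => b k ^ v)
      (div_nonneg (by linarith) hu0.le) (div_nonneg (by linarith) hv0.le) hθ
    simp only [← rpow_mul, mul_div_cancel₀ _ hu0.ne', mul_div_cancel₀ _ hv0.ne', hrow] at h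
    exact h
  have hdiag : ∑' i, ∑' k, ψ (i - k) ^ u * b k ^ v = A * B := by
    rw [ENNReal.tsum_comm]
    simp only [ENNReal.tsum_mul_right, hcol, ENNReal.tsum_mul_left, B]
  calc ∑' i, (∑' k, ψ (i - k) * b k) ^ 2
      ≤ ∑' i, (∑' k, ψ (i - k) ^ u * b k ^ v) * (A ^ ((2 - u) / u) * B ^ ((2 - v) / v)) :=
        ENNReal.tsum_le_tsum fun i =>
          (tsum_mul_sq_le hu0.le hu2 hv0.le hv2 _ _).trans (mul_le_mul_right (hholder i) _)
    _ = A ^ (1 + (2 - u) / u) * B ^ (1 + (2 - v) / v) := by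
        rw [ENNReal.tsum_mul_right, hdiag, rpow_add_of_nonneg _ _ zero_le_one
            (div_nonneg (by linarith) hu0.le),
          rpow_add_of_nonneg _ _ zero_le_one (div_nonneg (by linarith) hv0.le), rpow_one, rpow_one]
        ring
    _ = A ^ (2 / u) * B ^ (2 / v) := by
        rw [one_add_div hu0.ne', one_add_div hv0.ne', add_sub_cancel, add_sub_cancel]

lemma ofReal_tsum_le_tsum_ofReal {f : ι → ℝ} (hf : ∀ i, 0 ≤ f i) :
    ENNReal.ofReal (∑' i, f i) ≤ ∑' i, ENNReal.ofReal (f i) := by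
  by_cases hs : Summable f
  · exact (ofReal_tsum_of_nonneg hf hs).le
  · simp [tsum_eq_zero_of_not_summable hs]

lemma summable_and_tsum_le_of_tsum_ofReal_le {f : ι → ℝ} (hf : ∀ i, 0 ≤ f i) {C : ℝ}
    (hC : 0 ≤ C) (h : ∑' i, ENNReal.ofReal (f i) ≤ ENNReal.ofReal C) :
    Summable f ∧ ∑' i, f i ≤ C := by
  have hs : Summable f := by
    simpa only [toReal_ofReal (hf _)] using summable_toReal (ne_top_of_le_ne_top ofReal_ne_top h)
  refine ⟨hs, (ofReal_le_ofReal_iff hC).1 ?_⟩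
  rwa [ofReal_tsum_of_nonneg hf hs]

end ENNReal

theorem summable_sq_and_tsum_sq_le_of_le_conv {ι : Type*} [AddCommGroup ι] {ψ b w : ι → ℝ}
    (hψ0 : ∀ i, 0 ≤ ψ i) (hb0 : ∀ i, 0 ≤ b i) (hw0 : ∀ i, 0 ≤ w i) {u v : ℝ} (hu : 1 ≤ u)
    (hv : 1 ≤ v) (huv : 1 / u + 1 / v = 3 / 2) (hψ : Summable fun i => ψ i ^ u)
    (hb : Summable fun i => b i ^ v) (hw : ∀ i, w i ≤ ∑' k, ψ (i - k) * b k) :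
    Summable (fun i => w i ^ 2) ∧
      ∑' i, w i ^ 2 ≤ (∑' i, ψ i ^ u) ^ (2 / u) * (∑' i, b i ^ v) ^ (2 / v) := by
  have hofReal_tsum_rpow : ∀ {f : ι → ℝ} {p : ℝ}, (∀ i, 0 ≤ f i) → 0 ≤ p →
      Summable (fun i => f i ^ p) →
      ∑' i, ENNReal.ofReal (f i) ^ p = ENNReal.ofReal (∑' i, f i ^ p) := by
    intro f p hf hp hs
    rw [ENNReal.ofReal_tsum_of_nonneg (fun i => rpow_nonneg (hf i) p) hs]
    exact tsum_congr fun i => ENNReal.ofReal_rpow_of_nonneg (hf i) hp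
  have hconv : ∀ i, ENNReal.ofReal (w i) ≤
      ∑' k, ENNReal.ofReal (ψ (i - k)) * ENNReal.ofReal (b k) := fun i =>
    calc ENNReal.ofReal (w i) ≤ ENNReal.ofReal (∑' k, ψ (i - k) * b k) :=
          ENNReal.ofReal_le_ofReal (hw i)
      _ ≤ ∑' k, ENNReal.ofReal (ψ (i - k) * b k) :=
        ENNReal.ofReal_tsum_le_tsum_ofReal fun k => mul_nonneg (hψ0 _) (hb0 _)
      _ = _ := tsum_congr fun k => ENNReal.ofReal_mul (hψ0 _)
  have hA : 0 ≤ ∑' i, ψ i ^ u := tsum_nonneg fun i => rpow_nonneg (hψ0 i) u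
  have hB : 0 ≤ ∑' i, b i ^ v := tsum_nonneg fun i => rpow_nonneg (hb0 i) v
  refine ENNReal.summable_and_tsum_le_of_tsum_ofReal_le (fun i => sq_nonneg _)
    (mul_nonneg (rpow_nonneg hA _) (rpow_nonneg hB _)) ?_
  calc ∑' i, ENNReal.ofReal (w i ^ 2) = ∑' i, ENNReal.ofReal (w i) ^ 2 :=
        tsum_congr fun i => ENNReal.ofReal_pow (hw0 i) 2
    _ ≤ ∑' i, (∑' k, ENNReal.ofReal (ψ (i - k)) * ENNReal.ofReal (b k)) ^ 2 :=
        ENNReal.tsum_le_tsum fun i => pow_le_pow_left' (hconv i) 2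
    _ ≤ (∑' i, ENNReal.ofReal (ψ i) ^ u) ^ (2 / u) * (∑' i, ENNReal.ofReal (b i) ^ v) ^ (2 / v) :=
        ENNReal.tsum_conv_sq_le _ _ hu hv huv
    _ = _ := by
        rw [hofReal_tsum_rpow hψ0 (by linarith) hψ, hofReal_tsum_rpow hb0 (by linarith) hb,
          ENNReal.ofReal_rpow_of_nonneg hA (by positivity),
          ENNReal.ofReal_rpow_of_nonneg hB (by positivity), ← ENNReal.ofReal_mul (rpow_nonneg hA _)]

section Variation

variable {d : ℕ} (i : Fin d → ℤ) (f : Config d → ℝ)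

lemma flipAt_flipAt (σ : Config d) : flipAt i (flipAt i σ) = σ := by
  simp [flipAt]

lemma varAt_nonneg : 0 ≤ varAt i f := by
  by_cases hb : BddAbove (Set.range fun η : Config d => f (flipAt i η) - f η)
  · -- `η` and `flipAt i η` contribute opposite increments to the supremum
    obtain ⟨η⟩ : Nonempty (Config d) := inferInstance
    have h₁ := le_ciSup hb η
    have h₂ := le_ciSup hb (flipAt i η)
    rw [flipAt_flipAt] at h₂
    unfold varAt
    linarith
  · exact (Real.iSup_of_not_bddAbove hb).ge

lemma varAt_neg : varAt i (fun σ => -f σ) = varAt i f := by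
  calc ⨆ η, (-f (flipAt i η) - -f η)
      = ⨆ η, (-f (flipAt i (flipAt i η)) - -f (flipAt i η)) :=
        ((Function.Involutive.surjective (flipAt_flipAt i)).iSup_comp _).symm
    _ = ⨆ η, (f (flipAt i η) - f η) := iSup_congr fun η => by rw [flipAt_flipAt]; ring

lemma varAt_const_mul_of_nonneg {t : ℝ} (ht : 0 ≤ t) :
    varAt i (fun σ => t * f σ) = t * varAt i f := by
  unfold varAt
  rw [Real.mul_iSup_of_nonneg ht]
  exact iSup_congr fun η => by ring

lemma varAt_const_mul (t : ℝ) : varAt i (fun σ => t * f σ) = |t| * varAt i f := by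
  rcases le_total 0 t with ht | ht
  · rw [abs_of_nonneg ht, varAt_const_mul_of_nonneg i f ht]
  · have hneg : (fun σ => t * f σ) = fun σ => |t| * -f σ := by
      funext σ; rw [abs_of_nonpos ht]; ring
    rw [hneg, varAt_const_mul_of_nonneg i _ (abs_nonneg t), varAt_neg]

end Variation

lemma ProbabilityTheory.HasSubgaussianMGF.measureReal_abs_ge_le {Ω : Type*} [MeasurableSpace Ω]
    {μ : Measure Ω} [IsFiniteMeasure μ] {X : Ω → ℝ} {c : ℝ≥0}
    (h : HasSubgaussianMGF X c μ) {ε : ℝ} (hε : 0 ≤ ε) :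
    μ.real {ω | ε ≤ |X ω|} ≤ 2 * exp (-ε ^ 2 / (2 * c)) := by
  calc μ.real {ω | ε ≤ |X ω|} ≤ μ.real ({ω | ε ≤ X ω} ∪ {ω | ε ≤ (-X) ω}) :=
        measureReal_mono fun ω hω => by
          rcases le_abs'.1 (show ε ≤ |X ω| from hω) with hneg | hpos
          · exact Or.inr (show ε ≤ -X ω by linarith)
          · exact Or.inl hpos
    _ ≤ μ.real {ω | ε ≤ X ω} + μ.real {ω | ε ≤ (-X) ω} := measureReal_union_le _ _
    _ ≤ 2 * exp (-ε ^ 2 / (2 * c)) := by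
        rw [two_mul]; exact add_le_add (h.measure_ge_le hε) (h.neg.measure_ge_le hε)

namespace GEMB

open ProbabilityTheory

variable {d : ℕ} {μ : Measure (Config d)} {c : ℝ}

lemma mgf_le (hμ : GEMB μ c) {h : Config d → ℝ} (hm : Measurable h)
    (hb : ∃ M, ∀ σ, |h σ| ≤ M) (hs : Summable fun i => varAt i h ^ 2) (t : ℝ) :
    mgf (fun σ => h σ - ∫ τ, h τ ∂μ) μ t ≤ exp (c * t ^ 2 * ∑' i, varAt i h ^ 2) := by
  obtain ⟨M, hM⟩ := hb
  have hvar : ∀ i, varAt i (fun σ => t * h σ) ^ 2 = t ^ 2 * varAt i h ^ 2 := fun i => by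
    rw [varAt_const_mul, mul_pow, sq_abs]
  have key := hμ (fun σ => t * h σ) (hm.const_mul t)
    ⟨|t| * M, fun σ => by rw [abs_mul]; gcongr; exact hM σ⟩
    (by simpa only [hvar] using hs.mul_left (t ^ 2))
  simp only [hvar, tsum_mul_left, integral_const_mul, ← mul_sub, ← mul_assoc] at key
  exact key

lemma hasSubgaussianMGF [IsFiniteMeasure μ] (hμ : GEMB μ c) (hc : 0 ≤ c) {h : Config d → ℝ}
    (hm : Measurable h) (hb : ∃ M, ∀ σ, |h σ| ≤ M) (hs : Summable fun i => varAt i h ^ 2)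
    {K : ℝ} (hK : ∑' i, varAt i h ^ 2 ≤ K) :
    HasSubgaussianMGF (fun σ => h σ - ∫ τ, h τ ∂μ) (2 * c * K).toNNReal μ where
  integrable_exp_mul t := by
    obtain ⟨M, hM⟩ := hb
    refine integrable_exp_mul_of_mem_Icc (a := -M - ∫ τ, h τ ∂μ) (b := M - ∫ τ, h τ ∂μ)
      (hm.sub_const _).aemeasurable (ae_of_all _ fun σ => ?_)
    obtain ⟨hl, hr⟩ := abs_le.1 (hM σ)
    exact ⟨by linarith, by linarith⟩
  mgf_le t := by
    have hK0 : 0 ≤ K := (tsum_nonneg fun i => sq_nonneg _).trans hK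
    rw [Real.coe_toNNReal _ (by positivity)]
    refine (hμ.mgf_le hm hb hs t).trans (exp_le_exp.2 ?_)
    nlinarith [mul_le_mul_of_nonneg_left hK (by positivity : 0 ≤ c * t ^ 2)]

end GEMB

theorem gemb_two_sided_deviation_general {d : ℕ}
    (μ : Measure (Config d)) [IsProbabilityMeasure μ]
    (c : ℝ) (hc : 0 < c) (hGEMB : GEMB μ c)
    (f g : Config d → ℝ)
    (hg : Measurable g) (hgb : ∃ M, ∀ σ, |g σ| ≤ M)
    (ψ : (Fin d → ℤ) → ℝ) (hψ0 : ∀ i, 0 ≤ ψ i)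
    (hdom : ∀ i : Fin d → ℤ, varAt i g ≤ ∑' k : Fin d → ℤ, ψ (i - k) * varAt k f)
    (u v : ℝ) (hu : 1 ≤ u) (hv : 1 ≤ v) (huv : 1 / u + 1 / v = 3 / 2)
    (hψ : Summable (fun i : Fin d → ℤ => ψ i ^ u))
    (hfv : Summable (fun i : Fin d → ℤ => varAt i f ^ v))
    (a : ℝ) (ha : 0 ≤ a) :
    (μ {σ | a ≤ |g σ - ∫ τ, g τ ∂μ|}).toReal ≤
      2 * Real.exp (-a ^ 2 / (4 * c * ((∑' i : Fin d → ℤ, ψ i ^ u) ^ (1 / u)) ^ 2 *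
        ((∑' i : Fin d → ℤ, varAt i f ^ v) ^ (1 / v)) ^ 2)) := by
  have hA : 0 ≤ ∑' i, ψ i ^ u := tsum_nonneg fun i => rpow_nonneg (hψ0 i) u
  have hB : 0 ≤ ∑' i, varAt i f ^ v := tsum_nonneg fun i => rpow_nonneg (varAt_nonneg i f) v
  obtain ⟨hsum, hle⟩ := summable_sq_and_tsum_sq_le_of_le_conv hψ0 (fun k => varAt_nonneg k f)
    (fun i => varAt_nonneg i g) hu hv huv hψ hfv hdom
  have htail := (hGEMB.hasSubgaussianMGF hc.le hg hgb hsum hle).measureReal_abs_ge_le ha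
  rw [Real.coe_toNNReal _ (by positivity)] at htail
  refine htail.trans_eq ?_
  rw [← rpow_mul_natCast hA, ← rpow_mul_natCast hB]
  ring_nf

/-- Corollary 3.2 of the paper, two-sided deviation bound:
if `μ` satisfies GEMB(c), `δg ≤ ψ * δf` pointwise, `1/u + 1/v = 3/2`, and
`0 < ‖ψ‖_u < ∞`, `0 < ‖δf‖_v < ∞`, then
`μ(|g - ∫g dμ| ≥ a) ≤ 2 exp(-a²/(4c ‖ψ‖_u² ‖δf‖_v²))`. -/
theorem gemb_two_sided_deviation {d : ℕ} (hd : 1 ≤ d)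
    (μ : Measure (Config d)) [IsProbabilityMeasure μ]
    (c : ℝ) (hc : 0 < c) (hGEMB : GEMB μ c)
    (f g : Config d → ℝ) (hf : Measurable f) (hfb : ∃ M, ∀ σ, |f σ| ≤ M)
    (hg : Measurable g) (hgb : ∃ M, ∀ σ, |g σ| ≤ M)
    (ψ : (Fin d → ℤ) → ℝ) (hψ0 : ∀ i, 0 ≤ ψ i)
    (hdom : ∀ i : Fin d → ℤ, varAt i g ≤ ∑' k : Fin d → ℤ, ψ (i - k) * varAt k f)
    (u v : ℝ) (hu : 1 ≤ u) (hv : 1 ≤ v) (huv : 1 / u + 1 / v = 3 / 2)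
    (hψ : Summable (fun i : Fin d → ℤ => ψ i ^ u))
    (hψpos : 0 < ∑' i : Fin d → ℤ, ψ i ^ u)
    (hfv : Summable (fun i : Fin d → ℤ => varAt i f ^ v))
    (hfvpos : 0 < ∑' i : Fin d → ℤ, varAt i f ^ v)
    (a : ℝ) (ha : 0 ≤ a) :
    (μ {σ | a ≤ |g σ - ∫ τ, g τ ∂μ|}).toReal ≤
      2 * Real.exp (-a ^ 2 / (4 * c * ((∑' i : Fin d → ℤ, ψ i ^ u) ^ (1 / u)) ^ 2 *
        ((∑' i : Fin d → ℤ, varAt i f ^ v) ^ (1 / v)) ^ 2)) :=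
  gemb_two_sided_deviation_general μ c hc hGEMB f g hg hgb ψ hψ0 hdom u v hu hv huv hψ hfv a ha
end
end

section
/- Let γ : ℕ → [0,1) with γ_m ≤ m^{−α} for all m ≥ 1, where α > 1 is real. Let (q_m) be the return probabilities to 0 of the house-of-cards chain with parameters γ started at 0, i.e., q_0 = 1 and q_m = Σ_{j=0}^{m−1} q_{m−1−j} π_j γ_j for m ≥ 1, where π_0 = 1 and π_{j+1} = π_j (1 − γ_j). Then there exists a constant C > 0 such that q_m ≤ C m^{−α} for all m ≥ 1. -/
/-!
Write `f j = π j γ j` for the law of the first return time, so that `q` solves the renewal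
equation `q m = ∑_{j < m} q (m - 1 - j) f j`. Since `∑ γ < ∞`, the survival probabilities `π n`
stay above some `c > 0`; hence `f` has total mass at most `1 - c < 1`, and the last-visit
decomposition `∑_{k ≤ m} q k π (m - k) = 1` gives `∑ q ≤ 1 / c`.

The bound `q m ≤ C m^{-α}` then follows by strong induction on `m`. Fix `δ > 0` and a cutoff `J`
beyond which `f` has mass at most `δ 4^{-α}`. For large `m`, the terms of the renewal equation
with `j < J` contribute at most `(1 + δ) (1 - c) C m^{-α}`, those with `J ≤ j < m / 2` at most
`C (m / 4)^{-α} δ 4^{-α}`, and those with `j ≥ m / 2` at most `(m / 2)^{-α} ∑ q`. For `δ` small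
and `C` large the total is at most `C m^{-α}`.
-/

open Finset Filter Topology Real

theorem Finset.one_sub_sum_le_prod_one_sub {ι R : Type*} [CommRing R] [LinearOrder R]
    [IsStrictOrderedRing R] (s : Finset ι) {a : ι → R} (h0 : ∀ i ∈ s, 0 ≤ a i)
    (h1 : ∀ i ∈ s, a i ≤ 1) : 1 - ∑ i ∈ s, a i ≤ ∏ i ∈ s, (1 - a i) := by
  induction s using Finset.cons_induction with
  | empty => simp
  | cons i s hi ih =>
    simp only [mem_cons, forall_eq_or_imp] at h0 h1
    rw [prod_cons, sum_cons]
    have hS : 0 ≤ ∑ j ∈ s, a j := sum_nonneg h0.2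
    nlinarith [mul_le_mul_of_nonneg_left (ih h0.2 h1.2) (sub_nonneg.2 h1.1), mul_nonneg h0.1 hS]

theorem Summable.exists_sum_Ico_le {f : ℕ → ℝ} (hf : Summable f) {ε : ℝ} (hε : 0 < ε) :
    ∃ N, ∀ n, ∑ j ∈ Ico N n, f j ≤ ε := by
  obtain ⟨N, hN⟩ := Metric.cauchySeq_iff'.1 hf.hasSum.tendsto_sum_nat.cauchySeq ε hε
  refine ⟨N, fun n => ?_⟩
  rcases le_total N n with h | h
  · rw [sum_Ico_eq_sub _ h]
    exact (le_abs_self _).trans (hN n h).le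
  · simp [Ico_eq_empty_of_le h, hε.le]

theorem exists_pos_le_prod_one_sub {a : ℕ → ℝ} (h0 : ∀ n, 0 ≤ a n) (h1 : ∀ n, a n < 1)
    (ha : Summable a) : ∃ c > 0, ∀ n, c ≤ ∏ l ∈ range n, (1 - a l) := by
  obtain ⟨N, hN⟩ := ha.exists_sum_Ico_le one_half_pos
  set P := ∏ l ∈ range N, (1 - a l)
  have hP : 0 < P := prod_pos fun l _ => sub_pos.2 (h1 l)
  have hfactor : ∀ s : Finset ℕ, ∏ l ∈ s, (1 - a l) ≤ 1 :=
    fun s => prod_le_one (fun l _ => sub_nonneg.2 (h1 l).le) (fun l _ => sub_le_self _ (h0 l))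
  refine ⟨P / 2, by positivity, fun n => ?_⟩
  rcases le_total n N with hn | hn
  · calc P / 2 ≤ P := by linarith
      _ = (∏ l ∈ range n, (1 - a l)) * ∏ l ∈ Ico n N, (1 - a l) :=
        (prod_range_mul_prod_Ico _ hn).symm
      _ ≤ ∏ l ∈ range n, (1 - a l) :=
        mul_le_of_le_one_right (prod_nonneg fun l _ => sub_nonneg.2 (h1 l).le) (hfactor _)
  · calc P / 2 ≤ P * (1 - ∑ l ∈ Ico N n, a l) := by nlinarith [hN n]
      _ ≤ P * ∏ l ∈ Ico N n, (1 - a l) :=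
        mul_le_mul_of_nonneg_left ((Ico N n).one_sub_sum_le_prod_one_sub (fun l _ => h0 l)
          (fun l _ => (h1 l).le)) hP.le
      _ = ∏ l ∈ range n, (1 - a l) := prod_range_mul_prod_Ico _ hn

theorem Real.div_rpow_neg {x b : ℝ} (hx : 0 ≤ x) (hb : 0 < b) (α : ℝ) :
    (x / b) ^ (-α) = b ^ α * x ^ (-α) := by
  rw [div_rpow hx hb.le, rpow_neg hb.le, div_inv_eq_mul, mul_comm]

theorem Real.one_le_rpow_mul_rpow_neg {x y α : ℝ} (hx : 0 < x) (hxy : x ≤ y) (hα : 0 ≤ α) :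
    1 ≤ y ^ α * x ^ (-α) := by
  rw [rpow_neg hx.le, ← div_eq_mul_inv, one_le_div (rpow_pos_of_pos hx α)]
  exact rpow_le_rpow hx.le hxy hα

theorem eventually_rpow_neg_sub_le (α a : ℝ) {η : ℝ} (hη : 0 < η) :
    ∀ᶠ x : ℝ in atTop, (x - a) ^ (-α) ≤ (1 + η) * x ^ (-α) := by
  have hlim : Tendsto (fun x : ℝ => (1 - a / x) ^ (-α)) atTop (𝓝 1) := by
    have : Tendsto (fun x : ℝ => 1 - a / x) atTop (𝓝 1) := by
      simpa using tendsto_const_nhds.sub ((tendsto_const_nhds (x := a)).div_atTop tendsto_id)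
    simpa using this.rpow_const (Or.inl one_ne_zero)
  filter_upwards [hlim.eventually_lt_const (by linarith : (1 : ℝ) < 1 + η),
    eventually_gt_atTop (max a 0)] with x hx hxa
  have hx0 : 0 < x := (le_max_right _ _).trans_lt hxa
  have hax : a < x := (le_max_left _ _).trans_lt hxa
  calc (x - a) ^ (-α) = (1 - a / x) ^ (-α) * x ^ (-α) := by
        rw [← mul_rpow (by rw [sub_nonneg, div_le_one hx0]; exact hax.le) hx0.le]
        congr 1
        field_simp
    _ ≤ (1 + η) * x ^ (-α) := mul_le_mul_of_nonneg_right hx.le (rpow_nonneg hx0.le _)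

theorem mul_le_of_forall_lt_le_rpow {f q : ℕ → ℝ} {α K C : ℝ} {j m : ℕ} (hα : 0 ≤ α)
    (hf : ∀ j, 0 ≤ f j) (hfK : ∀ j, 1 ≤ j → f j ≤ K * (j : ℝ) ^ (-α)) (hqnn : ∀ k, 0 ≤ q k)
    (hC : 0 ≤ C) (ih : ∀ k, 1 ≤ k → k < m → q k ≤ C * (k : ℝ) ^ (-α)) (hm : 2 ≤ m)
    (hjm : j < m) :
    q (m - 1 - j) * f j
      ≤ C * (4 ^ α * (m : ℝ) ^ (-α)) * f j + K * (2 ^ α * (m : ℝ) ^ (-α)) * q (m - 1 - j) := by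
  have hm0 : (0 : ℝ) < m := by positivity
  have hK : 0 ≤ K := by simpa using (hf 1).trans (hfK 1 le_rfl)
  by_cases hj2 : 2 * j < m
  · have hquarter : (m : ℝ) / 4 ≤ (m - 1 - j : ℕ) := by
      rw [div_le_iff₀ four_pos]
      exact_mod_cast (by omega : m ≤ (m - 1 - j) * 4)
    have hq' : q (m - 1 - j) ≤ C * (4 ^ α * (m : ℝ) ^ (-α)) := by
      refine (ih _ (by omega) (by omega)).trans (mul_le_mul_of_nonneg_left ?_ hC)
      rw [← div_rpow_neg hm0.le four_pos]
      exact rpow_le_rpow_of_nonpos (by positivity) hquarter (neg_nonpos.2 hα)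
    have hD : 0 ≤ K * (2 ^ α * (m : ℝ) ^ (-α)) := by positivity
    nlinarith [mul_le_mul_of_nonneg_right hq' (hf j), mul_nonneg hD (hqnn (m - 1 - j))]
  · have hhalf : (m : ℝ) / 2 ≤ j := by
      rw [div_le_iff₀ two_pos]
      exact_mod_cast (by omega : m ≤ j * 2)
    have hfj : f j ≤ K * (2 ^ α * (m : ℝ) ^ (-α)) := by
      refine (hfK j (by omega)).trans (mul_le_mul_of_nonneg_left ?_ hK)
      rw [← div_rpow_neg hm0.le two_pos]
      exact rpow_le_rpow_of_nonpos (by positivity) hhalf (neg_nonpos.2 hα)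
    have hB : 0 ≤ C * (4 ^ α * (m : ℝ) ^ (-α)) := by positivity
    nlinarith [mul_le_mul_of_nonneg_left hfj (hqnn (m - 1 - j)), mul_nonneg hB (hf j)]

def RenewalEquation (f q : ℕ → ℝ) : Prop :=
  ∀ m, 1 ≤ m → q m = ∑ j ∈ range m, q (m - 1 - j) * f j

namespace RenewalEquation

variable {f q : ℕ → ℝ}

theorem nonneg (hq : RenewalEquation f q) (hf : ∀ j, 0 ≤ f j) (hq0 : 0 ≤ q 0) (m : ℕ) :
    0 ≤ q m := by
  induction m using Nat.strong_induction_on with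
  | _ m ih =>
    rcases Nat.eq_zero_or_pos m with rfl | hm
    · exact hq0
    · rw [hq m hm]
      exact sum_nonneg fun j _ => mul_nonneg (ih _ (by omega)) (hf j)

/-- Decomposition according to the last visit to `0` before time `m`. -/
theorem sum_mul_tail (hq : RenewalEquation f q) (m : ℕ) :
    ∑ k ∈ range (m + 1), q k * (1 - ∑ j ∈ range (m - k), f j) = q 0 := by
  induction m with
  | zero => simp
  | succ m ih =>
    have hlast : q (m + 1) = ∑ k ∈ range (m + 1), q k * f (m - k) := by
      rw [hq (m + 1) (by omega), ← sum_range_reflect]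
      refine sum_congr rfl fun k hk => ?_
      rw [mem_range] at hk
      congr 2; omega
    have hshift : ∀ k ∈ range (m + 1), q k * (1 - ∑ j ∈ range (m + 1 - k), f j)
        = q k * (1 - ∑ j ∈ range (m - k), f j) - q k * f (m - k) := by
      intro k hk
      rw [mem_range] at hk
      rw [show m + 1 - k = m - k + 1 by omega, sum_range_succ]
      ring
    rw [sum_range_succ, sum_congr rfl hshift, sum_sub_distrib, ih, ← hlast]
    simp

theorem sum_range_le (hq : RenewalEquation f q) {θ : ℝ} (hθ : θ < 1) (hf : ∀ j, 0 ≤ f j)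
    (hfθ : ∀ n, ∑ j ∈ range n, f j ≤ θ) (hq0 : 0 ≤ q 0) (n : ℕ) :
    ∑ k ∈ range n, q k ≤ q 0 / (1 - θ) := by
  rw [le_div_iff₀ (sub_pos.2 hθ)]
  cases n with
  | zero => simpa using hq0
  | succ m =>
    rw [← hq.sum_mul_tail m, sum_mul]
    exact sum_le_sum fun k _ => mul_le_mul_of_nonneg_left (by linarith [hfθ (m - k)])
      (hq.nonneg hf hq0 k)

theorem le_rpow_of_forall_lt (hq : RenewalEquation f q) {α θ K U ε η C : ℝ} {J m : ℕ}
    (hα : 0 ≤ α) (hf : ∀ j, 0 ≤ f j) (hfθ : ∀ n, ∑ j ∈ range n, f j ≤ θ)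
    (hfK : ∀ j, 1 ≤ j → f j ≤ K * (j : ℝ) ^ (-α)) (hqnn : ∀ k, 0 ≤ q k)
    (hqU : ∀ n, ∑ k ∈ range n, q k ≤ U)
    (hJ : ∀ n, ∑ j ∈ Ico J n, f j ≤ ε) (hJm : J < m) (hm : 2 ≤ m)
    (hhead : ((m : ℝ) - J) ^ (-α) ≤ (1 + η) * (m : ℝ) ^ (-α)) (hC : 0 ≤ C)
    (ih : ∀ k, 1 ≤ k → k < m → q k ≤ C * (k : ℝ) ^ (-α)) :
    q m ≤ (C * ((1 + η) * θ + 4 ^ α * ε) + K * 2 ^ α * U) * (m : ℝ) ^ (-α) := by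
  have hK : 0 ≤ K := by simpa using (hf 1).trans (hfK 1 le_rfl)
  set A := C * ((1 + η) * (m : ℝ) ^ (-α))
  set B := C * (4 ^ α * (m : ℝ) ^ (-α))
  set D := K * (2 ^ α * (m : ℝ) ^ (-α))
  have hA : 0 ≤ A :=
    mul_nonneg hC ((rpow_nonneg (sub_nonneg.2 (by exact_mod_cast hJm.le)) _).trans hhead)
  have head : ∀ j ∈ range J, q (m - 1 - j) * f j ≤ A * f j := by
    intro j hj
    rw [mem_range] at hj
    refine mul_le_mul_of_nonneg_right ?_ (hf j)
    refine (ih _ (by omega) (by omega)).trans (mul_le_mul_of_nonneg_left ?_ hC)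
    refine (rpow_le_rpow_of_nonpos (by simpa using hJm) ?_ (neg_nonpos.2 hα)).trans hhead
    rw [sub_le_iff_le_add, ← Nat.cast_add, Nat.cast_le]
    omega
  have tail : ∀ j ∈ Ico J m, q (m - 1 - j) * f j ≤ B * f j + D * q (m - 1 - j) :=
    fun j hj => mul_le_of_forall_lt_le_rpow hα hf hfK hqnn hC ih hm (mem_Ico.1 hj).2
  have hqsum : ∑ j ∈ Ico J m, q (m - 1 - j) ≤ U :=
    calc ∑ j ∈ Ico J m, q (m - 1 - j) ≤ ∑ j ∈ range m, q (m - 1 - j) :=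
          sum_le_sum_of_subset_of_nonneg (fun j => by simp only [mem_Ico, mem_range]; omega)
            fun _ _ _ => hqnn _
      _ = ∑ k ∈ range m, q k := sum_range_reflect q m
      _ ≤ U := hqU m
  calc q m = ∑ j ∈ range J, q (m - 1 - j) * f j + ∑ j ∈ Ico J m, q (m - 1 - j) * f j := by
        rw [hq m (by omega), sum_range_add_sum_Ico _ hJm.le]
    _ ≤ ∑ j ∈ range J, A * f j + ∑ j ∈ Ico J m, (B * f j + D * q (m - 1 - j)) :=
        add_le_add (sum_le_sum head) (sum_le_sum tail)
    _ = A * ∑ j ∈ range J, f j + B * ∑ j ∈ Ico J m, f j + D * ∑ j ∈ Ico J m, q (m - 1 - j) := by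
        rw [sum_add_distrib, mul_sum, mul_sum, mul_sum, add_assoc]
    _ ≤ A * θ + B * ε + D * U := by
      gcongr
      exacts [hfθ J, hJ m]
    _ = _ := by ring

theorem exists_le_rpow (hq : RenewalEquation f q) {α θ K : ℝ} (hα : 0 ≤ α) (hθ : θ < 1)
    (hf : ∀ j, 0 ≤ f j) (hfθ : ∀ n, ∑ j ∈ range n, f j ≤ θ)
    (hfK : ∀ j, 1 ≤ j → f j ≤ K * (j : ℝ) ^ (-α)) (hq0 : 0 ≤ q 0) :
    ∃ C, 0 < C ∧ ∀ m, 1 ≤ m → q m ≤ C * (m : ℝ) ^ (-α) := by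
  have hqnn := hq.nonneg hf hq0
  set U := q 0 / (1 - θ)
  have hqU : ∀ n, ∑ k ∈ range n, q k ≤ U := hq.sum_range_le hθ hf hfθ hq0
  set δ := (1 - θ) / 4 with hδ_def
  have hδ : 0 < δ := by positivity
  obtain ⟨J, hJ⟩ := (summable_of_sum_range_le hf hfθ).exists_sum_Ico_le
    (by positivity : 0 < δ / 4 ^ α)
  obtain ⟨m₀, hm₀⟩ := eventually_atTop.1
    (tendsto_natCast_atTop_atTop.eventually (eventually_rpow_neg_sub_le α J hδ))
  set m₁ := max m₀ (J + 2)
  set C := max 1 (max (2 * K * 2 ^ α * U / (1 - θ)) (U * (m₁ : ℝ) ^ α))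
  have hC : 0 < C := lt_max_of_lt_left one_pos
  have hCtail : 2 * K * 2 ^ α * U ≤ C * (1 - θ) :=
    (div_le_iff₀ (sub_pos.2 hθ)).1 ((le_max_left _ _).trans (le_max_right _ _))
  refine ⟨C, hC, fun m => ?_⟩
  induction m using Nat.strong_induction_on with
  | _ m ih =>
    intro hm
    rcases lt_or_ge m m₁ with hsmall | hlarge
    · have hqm : q m ≤ U :=
        (single_le_sum (fun k _ => hqnn k) (self_mem_range_succ m)).trans (hqU (m + 1))
      calc q m ≤ U * ((m₁ : ℝ) ^ α * (m : ℝ) ^ (-α)) :=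
            hqm.trans (le_mul_of_one_le_right (div_nonneg hq0 (sub_pos.2 hθ).le)
              (one_le_rpow_mul_rpow_neg (by positivity) (by exact_mod_cast hsmall.le) hα))
        _ ≤ C * (m : ℝ) ^ (-α) := by
            rw [← mul_assoc]
            exact mul_le_mul_of_nonneg_right ((le_max_right _ _).trans (le_max_right _ _))
              (by positivity)
    · have hstep := hq.le_rpow_of_forall_lt hα hf hfθ hfK hqnn hqU hJ
        (by omega : J < m) (by omega) (hm₀ m (le_of_max_le_left hlarge)) hC.le
        (fun k hk hkm => ih k hkm hk)
      refine hstep.trans (mul_le_mul_of_nonneg_right ?_ (by positivity))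
      have hcoef : (1 + δ) * θ + δ ≤ 1 - 2 * δ := by
        linarith [mul_le_of_le_one_right hδ.le hθ.le]
      calc C * ((1 + δ) * θ + 4 ^ α * (δ / 4 ^ α)) + K * 2 ^ α * U
          ≤ C * (1 - 2 * δ) + C * (2 * δ) := by
            rw [mul_div_cancel₀ _ (by positivity : (4 : ℝ) ^ α ≠ 0)]
            exact add_le_add (mul_le_mul_of_nonneg_left hcoef hC.le) (by rw [hδ_def]; linarith)
        _ = C := by ring

end RenewalEquation

/-- polynomial decay of the return probabilities of the
house-of-cards chain. If the reset probabilities satisfy `γ_m ≤ m^{-α}` with `α > 1`,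
then the return probabilities `q_m` (defined by the renewal recursion
`q_0 = 1`, `q_m = ∑_{j=0}^{m-1} q_{m-1-j} π_j γ_j`, where `π_0 = 1` and
`π_{j+1} = π_j (1 - γ_j)`) satisfy `q_m ≤ C m^{-α}` for some constant `C > 0`. -/
theorem houseOfCards_polynomial_decay (α : ℝ) (hα : 1 < α)
    (γ : ℕ → ℝ) (hγ : ∀ m, 0 ≤ γ m ∧ γ m < 1)
    (hdecay : ∀ m : ℕ, 1 ≤ m → γ m ≤ (m : ℝ) ^ (-α))
    (pi q : ℕ → ℝ)
    (hpi0 : pi 0 = 1) (hpi : ∀ j, pi (j + 1) = pi j * (1 - γ j))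
    (hq0 : q 0 = 1)
    (hq : ∀ m : ℕ, 1 ≤ m → q m = ∑ j ∈ Finset.range m, q (m - 1 - j) * pi j * γ j) :
    ∃ C : ℝ, 0 < C ∧ ∀ m : ℕ, 1 ≤ m → q m ≤ C * (m : ℝ) ^ (-α) := by
  have hγ0 : ∀ m, 0 ≤ γ m := fun m => (hγ m).1
  have hpi_eq : ∀ n, pi n = ∏ l ∈ range n, (1 - γ l) := by
    intro n
    induction n with
    | zero => simp [hpi0]
    | succ n ih => rw [hpi, ih, prod_range_succ]
  have hγ_summable : Summable γ :=
    (summable_nat_add_iff 1).1 <| ((summable_nat_add_iff 1).2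
      (summable_nat_rpow.2 (by linarith : -α < -1))).of_nonneg_of_le (fun j => hγ0 _)
      (fun j => hdecay (j + 1) (by omega))
  obtain ⟨c, hc, hc_le⟩ := exists_pos_le_prod_one_sub hγ0 (fun m => (hγ m).2) hγ_summable
  have hpi_le_one : ∀ n, pi n ≤ 1 := fun n => (hpi_eq n).symm ▸
    prod_le_one (fun l _ => sub_nonneg.2 (hγ l).2.le) (fun l _ => sub_le_self _ (hγ0 l))
  have htel : ∀ n, ∑ j ∈ range n, pi j * γ j = 1 - pi n := by
    intro n
    induction n with
    | zero => simp [hpi0]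
    | succ n ih => rw [sum_range_succ, ih, hpi]; ring
  have hrenewal : RenewalEquation (fun j => pi j * γ j) q := fun m hm => by
    simp only [hq m hm, mul_assoc]
  refine hrenewal.exists_le_rpow (θ := 1 - c) (K := 1) (by linarith) (by linarith)
    (fun j => mul_nonneg (hc.le.trans ((hc_le j).trans_eq (hpi_eq j).symm)) (hγ0 j))
    (fun n => ?_) (fun j hj => ?_) (hq0 ▸ zero_le_one)
  · rw [htel, hpi_eq]
    linarith [hc_le n]
  · rw [one_mul]
    exact (mul_le_of_le_one_left (hγ0 j) (hpi_le_one j)).trans (hdecay j hj)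
end
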